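/- There is an absolute constant c > 0 such that in the herald-protocol round model, for every vertex u with Γ°(u) > 0, the probability of the event B^u — that there exist a channel i ∈ {1,…,n_A} and a neighbor v of u such that u listens on channel i, v broadcasts on channel i, and no other neighbor of u broadcasts on channel i — is at most c · π_ℓ · γ(u) · min( Γ°(u), 1/Γ°(u) ). -/
import Mathlib


open Finset

/-- The action a vertex takes in one round: `none` is idle, `some (i, false)` is listening on
channel `i+1`, and `some (i, true)` is broadcasting on channel `i+1` (channels are numbered
`1, …, nA`). -/
abbrev Act (nA : ℕ) := Option (Fin nA × Bool)

/-- The probability of each action in the herald-protocol round model, for a vertex with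
activity `g` and listening probability `p`: on channel `i+1` the vertex listens with
probability `p·g·2^{-(i+1)}` and broadcasts with probability `(1−p)·g·2^{-(i+1)}`; with the
remaining probability it is idle. -/
noncomputable def actProb (nA : ℕ) (p g : ℝ) : Act nA → ℝ
  | some (i, false) => p * g * (2 : ℝ) ^ (-((i.1 : ℤ) + 1))
  | some (i, true) => (1 - p) * g * (2 : ℝ) ^ (-((i.1 : ℤ) + 1))
  | none => 1 - ∑ i : Fin nA, g * (2 : ℝ) ^ (-((i.1 : ℤ) + 1))

open Classical in
/-- The probability of an event `E` in one round of the herald-protocol round model, where all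
vertices choose their actions independently. -/
noncomputable def roundPr {V : Type*} [Fintype V] [DecidableEq V] (nA : ℕ) (p : ℝ)
    (γ : V → ℝ) (E : (V → Act nA) → Prop) : ℝ :=
  ∑ f : V → Act nA, if E f then ∏ v, actProb nA p (γ v) (f v) else 0

/-- `v` listens on channel `i` (i.e. channel number `i+1`). -/
def listens {V : Type*} {nA : ℕ} (f : V → Act nA) (v : V) (i : Fin nA) : Prop :=
  f v = some (i, false)

/-- `v` broadcasts on channel `i` (i.e. channel number `i+1`). -/
def broadcasts {V : Type*} {nA : ℕ} (f : V → Act nA) (v : V) (i : Fin nA) : Prop :=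
  f v = some (i, true)

/-- `v` operates (listens or broadcasts) on channel `i`. -/
def operates {V : Type*} {nA : ℕ} (f : V → Act nA) (v : V) (i : Fin nA) : Prop :=
  listens f v i ∨ broadcasts f v i

open Classical in
/-- `v` receives a message on channel `i`: it listens on channel `i` and exactly one of its
neighbors broadcasts on channel `i`. -/
def receivesOn {V : Type*} [Fintype V] [DecidableEq V] (G : SimpleGraph V)
    [DecidableRel G.Adj] {nA : ℕ} (f : V → Act nA) (v : V) (i : Fin nA) : Prop :=
  listens f v i ∧ ((G.neighborFinset v).filter fun w => broadcasts f w i).card = 1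

/-- `v` receives a message (on some channel). -/
def receives {V : Type*} [Fintype V] [DecidableEq V] (G : SimpleGraph V)
    [DecidableRel G.Adj] {nA : ℕ} (f : V → Act nA) (v : V) : Prop :=
  ∃ i : Fin nA, receivesOn G f v i

/-- `ball G u k` is the set `N^k(u)` of vertices at distance at most `k` from `u` in `G`
(including `u` itself). -/
def ball {V : Type*} (G : SimpleGraph V) (u : V) (k : ℕ) : Set V :=
  {v | ∃ p : G.Walk u v, p.length ≤ k}

/-- The independence number of the subgraph of `G` induced by a vertex set `S`. -/
noncomputable def indepNumOn {V : Type*} [Fintype V] (G : SimpleGraph V) (S : Set V) : ℕ :=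
  sSup {n | ∃ s : Finset V, ↑s ⊆ S ∧ (∀ a ∈ s, ∀ b ∈ s, a ≠ b → ¬ G.Adj a b) ∧ s.card = n}

/-- `Γ(x) = ∑_{y ∈ N(x) ∪ {x}} γ(y)`. -/
noncomputable def Gam {V : Type*} [Fintype V] [DecidableEq V] (G : SimpleGraph V)
    [DecidableRel G.Adj] (γ : V → ℝ) (x : V) : ℝ :=
  ∑ y ∈ insert x (G.neighborFinset x), γ y

/-- `Γ°(x) = ∑_{y ∈ N(x)} γ(y)`. -/
noncomputable def GamO {V : Type*} [Fintype V] [DecidableEq V] (G : SimpleGraph V)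
    [DecidableRel G.Adj] (γ : V → ℝ) (x : V) : ℝ :=
  ∑ y ∈ G.neighborFinset x, γ y


section Helpers
open Finset

private lemma two_zpow_eq' (k : ℕ) : (2:ℝ)^(-((k:ℤ)+1)) = (1/2:ℝ)/2^k := by
  have h : -((k:ℤ)+1) = -((k+1 : ℕ) : ℤ) := by push_cast; ring
  rw [h, zpow_neg, zpow_natCast, pow_succ]
  field_simp

private lemma two_zpow_pos' (k : ℕ) : (0:ℝ) < (2:ℝ)^(-((k:ℤ)+1)) := by positivity

private lemma two_zpow_le' (k : ℕ) : (2:ℝ)^(-((k:ℤ)+1)) ≤ 1/2 := by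
  have h : -((k:ℤ)+1) = -((k+1 : ℕ) : ℤ) := by push_cast; ring
  rw [h, zpow_neg, zpow_natCast]
  rw [show (1/2:ℝ) = (2^1)⁻¹ by norm_num]
  apply inv_anti₀ (by norm_num)
  exact pow_le_pow_right₀ (by norm_num) (by omega)

private lemma zsum_le' (n : ℕ) : ∑ i : Fin n, (2:ℝ)^(-((i:ℤ)+1)) ≤ 1 := by
  rw [Fin.sum_univ_eq_sum_range (fun i => (2:ℝ)^(-((i:ℤ)+1)))]
  calc ∑ i ∈ range n, (2:ℝ)^(-((i:ℤ)+1)) = (1/2) * ∑ i ∈ range n, (1/2:ℝ)^i := by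
        rw [mul_sum]; apply sum_congr rfl; intro i _
        rw [two_zpow_eq', div_eq_mul_inv, ← inv_pow]; norm_num
    _ ≤ (1/2) * 2 := by gcongr; exact sum_geometric_two_le n
    _ = 1 := by norm_num

private lemma actProb_nonneg' {nA : ℕ} {p g : ℝ} (hp0 : 0 ≤ p) (hp1 : p ≤ 1) (hg0 : 0 ≤ g)
    (hg1 : g ≤ 1/2) : ∀ a : Act nA, 0 ≤ actProb nA p g a := by
  rintro (_ | ⟨i, _ | _⟩)
  · show (0:ℝ) ≤ 1 - ∑ i : Fin nA, g * (2:ℝ)^(-((i:ℤ)+1))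
    have h1 : ∑ i : Fin nA, g * (2:ℝ)^(-((i:ℤ)+1)) = g * ∑ i : Fin nA, (2:ℝ)^(-((i:ℤ)+1)) := by
      rw [mul_sum]
    have h2 := zsum_le' nA
    nlinarith [Finset.sum_nonneg (fun i (_ : i ∈ (univ : Finset (Fin nA))) => (two_zpow_pos' (i:ℕ)).le)]
  · show (0:ℝ) ≤ p * g * (2:ℝ)^(-((i:ℤ)+1))
    positivity
  · show (0:ℝ) ≤ (1-p) * g * (2:ℝ)^(-((i:ℤ)+1))
    have : 0 ≤ 1 - p := by linarith
    positivity

private lemma sum_actProb' (nA : ℕ) (p g : ℝ) : ∑ a : Act nA, actProb nA p g a = 1 := by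
  rw [Fintype.sum_option]
  have h : ∑ x : Fin nA × Bool, actProb nA p g (some x)
      = ∑ i : Fin nA, g * (2:ℝ)^(-((i:ℤ)+1)) := by
    rw [Fintype.sum_prod_type]
    apply sum_congr rfl; intro i _
    rw [Fintype.sum_bool]
    show (1 - p) * g * _ + p * g * _ = _
    ring
  rw [h]
  show 1 - _ + _ = 1
  ring

open Classical in
private lemma roundPr_cylinder' {V : Type*} [Fintype V] [DecidableEq V] (nA : ℕ) (p : ℝ)
    (γ : V → ℝ) (S : V → Finset (Act nA)) :
    roundPr nA p γ (fun f => ∀ x, f x ∈ S x) = ∏ x, ∑ a ∈ S x, actProb nA p (γ x) a := by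
  classical
  unfold roundPr
  have h1 : ∀ f : V → Act nA,
      (if (∀ x, f x ∈ S x) then ∏ v, actProb nA p (γ v) (f v) else 0)
      = ∏ v, (if f v ∈ S v then actProb nA p (γ v) (f v) else 0) := by
    intro f
    by_cases h : ∀ x, f x ∈ S x
    · rw [if_pos h]
      exact prod_congr rfl fun x _ => (if_pos (h x)).symm
    · push_neg at h
      obtain ⟨x₀, hx₀⟩ := h
      rw [if_neg (by push_neg; exact ⟨x₀, hx₀⟩)]
      exact (prod_eq_zero (mem_univ x₀) (by rw [if_neg hx₀])).symm
  have h2 : ∀ x : V, ∑ a ∈ S x, actProb nA p (γ x) a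
      = ∑ a : Act nA, (if a ∈ S x then actProb nA p (γ x) a else 0) := by
    intro x
    rw [sum_ite_mem]
    congr 1
    simp
  rw [prod_congr rfl fun x _ => h2 x]
  rw [Finset.prod_univ_sum]
  rw [Fintype.piFinset_univ]
  refine sum_congr rfl fun f _ => ?_
  convert h1 f using 2

open Classical in
private lemma roundPr_union_le' {V : Type*} [Fintype V] [DecidableEq V] {ι : Type*} (nA : ℕ)
    (p : ℝ) (γ : V → ℝ) (E : (V → Act nA) → Prop) (J : Finset ι)
    (F : ι → (V → Act nA) → Prop)
    (h0 : ∀ f : V → Act nA, 0 ≤ ∏ v, actProb nA p (γ v) (f v))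
    (hcov : ∀ f, E f → ∃ j ∈ J, F j f) :
    roundPr nA p γ E ≤ ∑ j ∈ J, roundPr nA p γ (F j) := by
  classical
  unfold roundPr
  rw [Finset.sum_comm]
  apply sum_le_sum
  intro f _
  by_cases h : E f
  · obtain ⟨j, hj, hFj⟩ := hcov f h
    rw [if_pos h]
    calc ∏ v, actProb nA p (γ v) (f v)
        = (if F j f then ∏ v, actProb nA p (γ v) (f v) else 0) := by rw [if_pos hFj]
      _ ≤ ∑ j ∈ J, (if F j f then ∏ v, actProb nA p (γ v) (f v) else 0) := by
          apply single_le_sum (fun k _ => ?_) hj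
          split_ifs
          exacts [h0 f, le_rfl]
  · rw [if_neg h]
    apply sum_nonneg; intro j _
    split_ifs
    exacts [h0 f, le_rfl]

private lemma cube_le_two_exp' {x : ℝ} (hx : 0 ≤ x) : x^3 ≤ 2 * Real.exp x := by
  have h1 : x/3 ≤ Real.exp (x/3 - 1) := by
    have := Real.add_one_le_exp (x/3 - 1); linarith
  have h2 : Real.exp (x/3 - 1) = Real.exp (x/3) / Real.exp 1 := by
    rw [Real.exp_sub]
  have he : (2.7182818283 : ℝ) < Real.exp 1 := Real.exp_one_gt_d9
  have h3 : x/3 * Real.exp 1 ≤ Real.exp (x/3) := by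
    rw [h2] at h1
    have := Real.exp_pos 1
    calc x/3 * Real.exp 1 ≤ (Real.exp (x/3) / Real.exp 1) * Real.exp 1 := by
          apply mul_le_mul_of_nonneg_right h1 this.le
      _ = Real.exp (x/3) := by field_simp
  have h4 : (x/3 * Real.exp 1)^3 ≤ (Real.exp (x/3))^3 := by
    apply pow_le_pow_left₀ (by positivity) h3
  have h5 : (Real.exp (x/3))^3 = Real.exp x := by
    rw [← Real.exp_nat_mul]
    norm_num
    ring_nf
  have he3 : (13.5:ℝ) ≤ (Real.exp 1)^3 := by
    have h0 : (2.7:ℝ) ≤ Real.exp 1 := by linarith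
    calc (13.5:ℝ) ≤ 2.7^3 := by norm_num
      _ ≤ (Real.exp 1)^3 := by gcongr
  nlinarith [Real.exp_pos x]

private lemma exp_quarter_le_two' : Real.exp (1/4 : ℝ) ≤ 2 := by
  have h4 : (Real.exp (1/4:ℝ))^4 = Real.exp 1 := by
    rw [← Real.exp_nat_mul]
    norm_num
  have he : Real.exp 1 < 2.7182818286 := Real.exp_one_lt_d9
  by_contra hc
  push_neg at hc
  have h16 : (2:ℝ)^4 < (Real.exp (1/4:ℝ))^4 := by
    apply pow_lt_pow_left₀ hc (by norm_num)
    norm_num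
  rw [h4] at h16
  norm_num at h16
  linarith

private lemma prod_one_sub_le_exp' {V : Type*} [DecidableEq V] (s : Finset V) (q : V → ℝ)
    (h : ∀ w ∈ s, 0 ≤ q w ∧ q w ≤ 1) :
    ∏ w ∈ s, (1 - q w) ≤ Real.exp (-∑ w ∈ s, q w) := by
  have hrw : Real.exp (-∑ w ∈ s, q w) = ∏ w ∈ s, Real.exp (-(q w)) := by
    rw [← Real.exp_sum]
    congr 1
    rw [Finset.sum_neg_distrib]
  rw [hrw]
  apply prod_le_prod
  · intro w hw; linarith [(h w hw).2]
  · intro w hw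
    have := Real.add_one_le_exp (-(q w)); linarith

private lemma key_sum_aux' : ∀ (n : ℕ) (t : ℝ), 0 < t →
    ∑ i ∈ range n, min ((t/2^i)^2) (2/(t/2^i)) ≤ (if t ≤ 1 then (4/3)*t^2 else 5 - 2/t) := by
  intro n
  induction n with
  | zero =>
    intro t ht
    simp only [range_zero, sum_empty]
    by_cases h1 : t ≤ 1
    · rw [if_pos h1]; positivity
    · rw [if_neg h1]
      push_neg at h1
      have : 2/t ≤ 2 := by rw [div_le_iff₀ (by linarith)]; nlinarith
      linarith
  | succ n ih =>
    intro t ht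
    rw [Finset.sum_range_succ']
    have hstep : ∑ i ∈ range n, min ((t/2^(i+1))^2) (2/(t/2^(i+1)))
        ≤ (if t/2 ≤ 1 then (4/3)*(t/2)^2 else 5 - 2/(t/2)) := by
      have h := ih (t/2) (by linarith)
      calc ∑ i ∈ range n, min ((t/2^(i+1))^2) (2/(t/2^(i+1)))
          = ∑ i ∈ range n, min (((t/2)/2^i)^2) (2/((t/2)/2^i)) := by
            apply sum_congr rfl; intro i _
            rw [show t/2^(i+1) = (t/2)/2^i by rw [pow_succ]; ring]
        _ ≤ _ := h
    have hf0 : min ((t/2^0)^2) (2/(t/2^0)) = min (t^2) (2/t) := by norm_num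
    rw [hf0]
    have hfa : min (t^2) (2/t) ≤ t^2 := min_le_left _ _
    have hfb : min (t^2) (2/t) ≤ 2/t := min_le_right _ _
    by_cases h1 : t ≤ 1
    · rw [if_pos h1]
      rw [if_pos (by linarith : t/2 ≤ 1)] at hstep
      nlinarith
    · rw [if_neg h1]
      push_neg at h1
      by_cases h2 : t ≤ 2
      · rw [if_pos (by linarith : t/2 ≤ 1)] at hstep
        have key : 2/t + (4/3)*(t/2)^2 + 2/t ≤ 5 := by
          rw [← sub_nonneg]
          have heq : 5 - (2/t + (4/3)*(t/2)^2 + 2/t) = (15*t - 12 - t^3)/(3*t) := by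
            field_simp; ring
          rw [heq]
          apply div_nonneg _ (by linarith)
          nlinarith [mul_nonneg (sub_nonneg.mpr h1.le) (sub_nonneg.mpr h2), sq_nonneg (t-1), sq_nonneg (t-2)]
        linarith
      · push_neg at h2
        rw [if_neg (by push_neg; linarith : ¬ t/2 ≤ 1)] at hstep
        rw [show 2/(t/2) = 4/t by rw [div_div_eq_mul_div]; norm_num] at hstep
        have h3 : 2/t ≤ 4/t - 2/t := by
          rw [div_sub_div_same]; norm_num
        linarith

private lemma key_sum' (n : ℕ) (t : ℝ) (ht : 0 < t) :
    ∑ i ∈ range n, min ((t/2^i)^2) (2/(t/2^i)) ≤ 5 := by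
  refine le_trans (key_sum_aux' n t ht) ?_
  by_cases h1 : t ≤ 1
  · rw [if_pos h1]; nlinarith
  · rw [if_neg h1]
    push_neg at h1
    have : 0 < 2/t := by positivity
    linarith

/-- The cylinder set used in the union bound. -/
def cylS {V : Type} [Fintype V] [DecidableEq V] (G : SimpleGraph V) [DecidableRel G.Adj] {nA : ℕ}
    (u v : V) (i : Fin nA) (x : V) : Finset (Act nA) :=
  if x = u then {some (i, false)} else if x = v then {some (i, true)}
  else if x ∈ G.neighborFinset u then Finset.univ.erase (some (i, true)) else Finset.univ

private lemma cyl_eval {V : Type} [Fintype V] [DecidableEq V] (G : SimpleGraph V)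
    [DecidableRel G.Adj] {nA : ℕ} (pl : ℝ) (γ : V → ℝ) (u v : V) (i : Fin nA)
    (hv : v ∈ G.neighborFinset u) :
    roundPr nA pl γ (fun f => ∀ x, f x ∈ cylS G u v i x)
    = (pl * γ u * (2:ℝ)^(-((i.1:ℤ)+1))) * (((1-pl) * γ v * (2:ℝ)^(-((i.1:ℤ)+1)))
      * ∏ w ∈ (G.neighborFinset u).erase v, (1 - (1-pl) * γ w * (2:ℝ)^(-((i.1:ℤ)+1)))) := by
  classical
  rw [roundPr_cylinder']
  have huv : u ≠ v := fun h => (G.irrefl (h ▸ (G.mem_neighborFinset u v).mp hv))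
  have hunotN : u ∉ G.neighborFinset u := by
    rw [SimpleGraph.mem_neighborFinset]; exact fun h => G.irrefl h
  set T : Finset V := insert u (insert v ((G.neighborFinset u).erase v)) with hT
  have huT : u ∉ insert v ((G.neighborFinset u).erase v) := by
    rw [mem_insert]
    push_neg
    exact ⟨huv, fun h => hunotN (mem_of_mem_erase h)⟩
  have hvT : v ∉ (G.neighborFinset u).erase v := notMem_erase _ _
  have hout : ∀ x ∈ (univ : Finset V), x ∉ T →
      (∑ a ∈ cylS G u v i x, actProb nA pl (γ x) a) = 1 := by
    intro x _ hx
    rw [hT, mem_insert, mem_insert, mem_erase] at hx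
    push_neg at hx
    obtain ⟨hx1, hx2, hx3⟩ := hx
    have hxN : x ∉ G.neighborFinset u := fun h => absurd (hx3 hx2 h) (by simp)
    unfold cylS
    rw [if_neg hx1, if_neg hx2, if_neg hxN]
    exact sum_actProb' nA pl (γ x)
  rw [← prod_subset (subset_univ T) hout]
  rw [hT, prod_insert huT, prod_insert hvT]
  have hgu : (∑ a ∈ cylS G u v i u, actProb nA pl (γ u) a)
      = pl * γ u * (2:ℝ)^(-((i.1:ℤ)+1)) := by
    unfold cylS
    rw [if_pos rfl, sum_singleton]
    rfl
  have hgv : (∑ a ∈ cylS G u v i v, actProb nA pl (γ v) a)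
      = (1-pl) * γ v * (2:ℝ)^(-((i.1:ℤ)+1)) := by
    unfold cylS
    rw [if_neg (Ne.symm huv), if_pos rfl, sum_singleton]
    rfl
  have hgw : ∀ w ∈ (G.neighborFinset u).erase v,
      (∑ a ∈ cylS G u v i w, actProb nA pl (γ w) a)
      = 1 - (1-pl) * γ w * (2:ℝ)^(-((i.1:ℤ)+1)) := by
    intro w hw
    obtain ⟨hwv, hwN⟩ := mem_erase.mp hw
    have hwu : w ≠ u := fun h => hunotN (h ▸ hwN)
    unfold cylS
    rw [if_neg hwu, if_neg hwv, if_pos hwN]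
    rw [sum_erase_eq_sub (mem_univ _), sum_actProb']
    rfl
  rw [hgu, hgv, prod_congr rfl hgw]

end Helpers

/-- There is an absolute constant `c > 0` such that in the herald-protocol round model, for
every vertex `u` with `Γ°(u) > 0`, the probability of the event `B^u` — that for some channel
`i` and some neighbor `v` of `u`, `u` listens on `i`, `v` broadcasts on `i` and no other
neighbor of `u` broadcasts on `i` — is at most `c · π_ℓ · γ(u) · min(Γ°(u), 1/Γ°(u))`. -/
theorem stmt_16 : ∃ c : ℝ, 0 < c ∧
    ∀ (V : Type) [Fintype V] [DecidableEq V] (G : SimpleGraph V) [DecidableRel G.Adj]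
      (nA : ℕ), 1 ≤ nA →
      ∀ pl : ℝ, 0 < pl → pl ≤ 1 / 2 →
      ∀ γ : V → ℝ, (∀ x, 0 ≤ γ x ∧ γ x ≤ 1 / 2) →
      ∀ u : V, 0 < GamO G γ u →
      roundPr nA pl γ (fun f => ∃ i : Fin nA, ∃ v ∈ G.neighborFinset u,
          listens f u i ∧ broadcasts f v i ∧
          ∀ w ∈ G.neighborFinset u, w ≠ v → ¬ broadcasts f w i) ≤
        c * pl * γ u * min (GamO G γ u) (1 / GamO G γ u) := by
    classical
  refine ⟨20, by norm_num, ?_⟩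
  intro V _ _ G _ nA hnA pl hpl0 hpl2 γ hγ u hΓ0
  have hγ0 : ∀ x, 0 ≤ γ x := fun x => (hγ x).1
  have hγ1 : ∀ x, γ x ≤ 1/2 := fun x => (hγ x).2
  have hpl1 : pl ≤ 1 := by linarith
  have hunotN : u ∉ G.neighborFinset u := by
    rw [SimpleGraph.mem_neighborFinset]; exact fun h => G.irrefl h
  have h0 : ∀ f : V → Act nA, 0 ≤ ∏ v, actProb nA pl (γ v) (f v) :=
    fun f => prod_nonneg fun x _ => actProb_nonneg' hpl0.le hpl1 (hγ0 x) (hγ1 x) (f x)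
  -- abbreviations
  set Γ := GamO G γ u with hΓdef
  have hΓsum : ∀ i : Fin nA, ∑ v ∈ G.neighborFinset u, (1-pl) * γ v * (2:ℝ)^(-((i.1:ℤ)+1))
      = (1-pl) * (2:ℝ)^(-((i.1:ℤ)+1)) * Γ := by
    intro i
    rw [hΓdef, GamO, mul_sum]
    exact sum_congr rfl fun v _ => by ring
  have hq : ∀ (i : Fin nA) (w : V),
      0 ≤ (1-pl) * γ w * (2:ℝ)^(-((i.1:ℤ)+1)) ∧ (1-pl) * γ w * (2:ℝ)^(-((i.1:ℤ)+1)) ≤ 1/4 := by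
    intro i w
    have hz0 : (0:ℝ) < (2:ℝ)^(-((i.1:ℤ)+1)) := two_zpow_pos' i.1
    have hz1 : (2:ℝ)^(-((i.1:ℤ)+1)) ≤ 1/2 := two_zpow_le' i.1
    have hp' : (0:ℝ) ≤ 1 - pl := by linarith
    constructor
    · exact mul_nonneg (mul_nonneg hp' (hγ0 w)) hz0.le
    · have h1 : (1-pl) * γ w ≤ 1 * (1/2) :=
        mul_le_mul (by linarith) (hγ1 w) (hγ0 w) (by norm_num)
      have h2 : (1-pl) * γ w * (2:ℝ)^(-((i.1:ℤ)+1)) ≤ (1 * (1/2)) * (1/2) :=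
        mul_le_mul h1 hz1 hz0.le (by norm_num)
      linarith
  -- step 1: union bound + evaluation
  have hstep1 : roundPr nA pl γ (fun f => ∃ i : Fin nA, ∃ v ∈ G.neighborFinset u,
        listens f u i ∧ broadcasts f v i ∧
        ∀ w ∈ G.neighborFinset u, w ≠ v → ¬ broadcasts f w i)
      ≤ ∑ j ∈ ((univ : Finset (Fin nA)) ×ˢ G.neighborFinset u),
          roundPr nA pl γ (fun f => ∀ x, f x ∈ cylS G u j.2 j.1 x) := by
    apply roundPr_union_le' nA pl γ _ _ _ h0
    rintro f ⟨i, v, hv, hl, hb, hoth⟩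
    refine ⟨(i, v), by simp [Finset.mem_product, hv], ?_⟩
    intro x
    have huv : u ≠ v := fun h => (G.irrefl (h ▸ (G.mem_neighborFinset u v).mp hv))
    unfold cylS
    by_cases hxu : x = u
    · subst hxu; rw [if_pos rfl, mem_singleton]; exact hl
    · rw [if_neg hxu]
      by_cases hxv : x = v
      · subst hxv; rw [if_pos rfl, mem_singleton]; exact hb
      · rw [if_neg hxv]
        by_cases hxN : x ∈ G.neighborFinset u
        · rw [if_pos hxN, mem_erase]
          exact ⟨hoth x hxN hxv, mem_univ _⟩
        · rw [if_neg hxN]; exact mem_univ _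
  have hstep2 : ∑ j ∈ ((univ : Finset (Fin nA)) ×ˢ G.neighborFinset u),
        roundPr nA pl γ (fun f => ∀ x, f x ∈ cylS G u j.2 j.1 x)
      = ∑ i : Fin nA, ∑ v ∈ G.neighborFinset u,
          (pl * γ u * (2:ℝ)^(-((i.1:ℤ)+1))) * (((1-pl) * γ v * (2:ℝ)^(-((i.1:ℤ)+1)))
            * ∏ w ∈ (G.neighborFinset u).erase v,
                (1 - (1-pl) * γ w * (2:ℝ)^(-((i.1:ℤ)+1)))) := by
    rw [Finset.sum_product]
    exact sum_congr rfl fun i _ => sum_congr rfl fun v hv => cyl_eval G pl γ u v i hv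
  -- bound A: small Γ
  have hprod01 : ∀ (i : Fin nA) (v : V),
      0 ≤ (∏ w ∈ (G.neighborFinset u).erase v, (1 - (1-pl) * γ w * (2:ℝ)^(-((i.1:ℤ)+1)))) ∧
      (∏ w ∈ (G.neighborFinset u).erase v, (1 - (1-pl) * γ w * (2:ℝ)^(-((i.1:ℤ)+1)))) ≤ 1 := by
    intro i v
    constructor
    · apply prod_nonneg; intro w _; linarith [(hq i w).2]
    · apply prod_le_one
      · intro w _; linarith [(hq i w).2]
      · intro w _; linarith [(hq i w).1]
  have hSA : ∀ i : Fin nA, ∑ v ∈ G.neighborFinset u,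
      (((1-pl) * γ v * (2:ℝ)^(-((i.1:ℤ)+1)))
        * ∏ w ∈ (G.neighborFinset u).erase v, (1 - (1-pl) * γ w * (2:ℝ)^(-((i.1:ℤ)+1))))
      ≤ (1-pl) * (2:ℝ)^(-((i.1:ℤ)+1)) * Γ := by
    intro i
    rw [← hΓsum i]
    apply sum_le_sum
    intro v _
    exact mul_le_of_le_one_right (hq i v).1 (hprod01 i v).2
  have hΓpos : (0:ℝ) < Γ := hΓ0
  have hA : ∑ i : Fin nA, ∑ v ∈ G.neighborFinset u,
        (pl * γ u * (2:ℝ)^(-((i.1:ℤ)+1))) * (((1-pl) * γ v * (2:ℝ)^(-((i.1:ℤ)+1)))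
          * ∏ w ∈ (G.neighborFinset u).erase v, (1 - (1-pl) * γ w * (2:ℝ)^(-((i.1:ℤ)+1))))
      ≤ 20 * pl * γ u * Γ := by
    have hstepA : ∀ i : Fin nA, ∑ v ∈ G.neighborFinset u,
        (pl * γ u * (2:ℝ)^(-((i.1:ℤ)+1))) * (((1-pl) * γ v * (2:ℝ)^(-((i.1:ℤ)+1)))
          * ∏ w ∈ (G.neighborFinset u).erase v, (1 - (1-pl) * γ w * (2:ℝ)^(-((i.1:ℤ)+1))))
        ≤ (pl * γ u * Γ * (1/2)) * (2:ℝ)^(-((i.1:ℤ)+1)) := by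
      intro i
      have hz0 : (0:ℝ) < (2:ℝ)^(-((i.1:ℤ)+1)) := two_zpow_pos' i.1
      have hz1 : (2:ℝ)^(-((i.1:ℤ)+1)) ≤ 1/2 := two_zpow_le' i.1
      have hcoef : (0:ℝ) ≤ pl * γ u * (2:ℝ)^(-((i.1:ℤ)+1)) :=
        mul_nonneg (mul_nonneg hpl0.le (hγ0 u)) hz0.le
      calc ∑ v ∈ G.neighborFinset u,
            (pl * γ u * (2:ℝ)^(-((i.1:ℤ)+1))) * (((1-pl) * γ v * (2:ℝ)^(-((i.1:ℤ)+1)))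
              * ∏ w ∈ (G.neighborFinset u).erase v,
                  (1 - (1-pl) * γ w * (2:ℝ)^(-((i.1:ℤ)+1))))
          = (pl * γ u * (2:ℝ)^(-((i.1:ℤ)+1))) * ∑ v ∈ G.neighborFinset u,
            (((1-pl) * γ v * (2:ℝ)^(-((i.1:ℤ)+1)))
              * ∏ w ∈ (G.neighborFinset u).erase v,
                  (1 - (1-pl) * γ w * (2:ℝ)^(-((i.1:ℤ)+1)))) := by rw [mul_sum]
        _ ≤ (pl * γ u * (2:ℝ)^(-((i.1:ℤ)+1))) * ((1-pl) * (2:ℝ)^(-((i.1:ℤ)+1)) * Γ) :=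
            mul_le_mul_of_nonneg_left (hSA i) hcoef
        _ = (pl * γ u * (2:ℝ)^(-((i.1:ℤ)+1)) * Γ) * ((1-pl) * (2:ℝ)^(-((i.1:ℤ)+1))) := by
            ring
        _ ≤ (pl * γ u * (2:ℝ)^(-((i.1:ℤ)+1)) * Γ) * (1/2) := by
            apply mul_le_mul_of_nonneg_left _ (mul_nonneg hcoef hΓpos.le)
            nlinarith [mul_nonneg hpl0.le hz0.le]
        _ = (pl * γ u * Γ * (1/2)) * (2:ℝ)^(-((i.1:ℤ)+1)) := by ring
    calc ∑ i : Fin nA, ∑ v ∈ G.neighborFinset u,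
          (pl * γ u * (2:ℝ)^(-((i.1:ℤ)+1))) * (((1-pl) * γ v * (2:ℝ)^(-((i.1:ℤ)+1)))
            * ∏ w ∈ (G.neighborFinset u).erase v,
                (1 - (1-pl) * γ w * (2:ℝ)^(-((i.1:ℤ)+1))))
        ≤ ∑ i : Fin nA, (pl * γ u * Γ * (1/2)) * (2:ℝ)^(-((i.1:ℤ)+1)) :=
          sum_le_sum fun i _ => hstepA i
      _ = (pl * γ u * Γ * (1/2)) * ∑ i : Fin nA, (2:ℝ)^(-((i.1:ℤ)+1)) := by rw [mul_sum]
      _ ≤ (pl * γ u * Γ * (1/2)) * 1 := by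
          apply mul_le_mul_of_nonneg_left (zsum_le' nA)
          have := mul_nonneg (mul_nonneg hpl0.le (hγ0 u)) hΓpos.le
          linarith
      _ ≤ 20 * pl * γ u * Γ := by
          nlinarith [mul_nonneg (mul_nonneg hpl0.le (hγ0 u)) hΓpos.le]
  -- bound B: large Γ
  have hB : ∑ i : Fin nA, ∑ v ∈ G.neighborFinset u,
        (pl * γ u * (2:ℝ)^(-((i.1:ℤ)+1))) * (((1-pl) * γ v * (2:ℝ)^(-((i.1:ℤ)+1)))
          * ∏ w ∈ (G.neighborFinset u).erase v, (1 - (1-pl) * γ w * (2:ℝ)^(-((i.1:ℤ)+1))))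
      ≤ 20 * pl * γ u * (1/Γ) := by
    have hpl' : (1:ℝ)/2 ≤ 1 - pl := by linarith
    -- per-channel exponential bound
    have hS1 : ∀ i : Fin nA, ∑ v ∈ G.neighborFinset u,
        (((1-pl) * γ v * (2:ℝ)^(-((i.1:ℤ)+1)))
          * ∏ w ∈ (G.neighborFinset u).erase v, (1 - (1-pl) * γ w * (2:ℝ)^(-((i.1:ℤ)+1))))
        ≤ 2 * ((1-pl) * (2:ℝ)^(-((i.1:ℤ)+1)) * Γ)
            * Real.exp (-((1-pl) * (2:ℝ)^(-((i.1:ℤ)+1)) * Γ)) := by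
      intro i
      set Q := (1-pl) * (2:ℝ)^(-((i.1:ℤ)+1)) * Γ with hQdef
      have hperv : ∀ v ∈ G.neighborFinset u,
          (((1-pl) * γ v * (2:ℝ)^(-((i.1:ℤ)+1)))
            * ∏ w ∈ (G.neighborFinset u).erase v, (1 - (1-pl) * γ w * (2:ℝ)^(-((i.1:ℤ)+1))))
          ≤ ((1-pl) * γ v * (2:ℝ)^(-((i.1:ℤ)+1))) * (2 * Real.exp (-Q)) := by
        intro v hv
        apply mul_le_mul_of_nonneg_left _ (hq i v).1
        have hP1 : (∏ w ∈ (G.neighborFinset u).erase v,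
            (1 - (1-pl) * γ w * (2:ℝ)^(-((i.1:ℤ)+1))))
            ≤ Real.exp (-(∑ w ∈ (G.neighborFinset u).erase v,
                (1-pl) * γ w * (2:ℝ)^(-((i.1:ℤ)+1)))) := by
          apply prod_one_sub_le_exp'
          intro w _
          exact ⟨(hq i w).1, by linarith [(hq i w).2]⟩
        have hsum : ∑ w ∈ (G.neighborFinset u).erase v,
            (1-pl) * γ w * (2:ℝ)^(-((i.1:ℤ)+1))
            = Q - (1-pl) * γ v * (2:ℝ)^(-((i.1:ℤ)+1)) := by
          rw [sum_erase_eq_sub hv, hΓsum i]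
        rw [hsum] at hP1
        refine le_trans hP1 ?_
        have heq : -(Q - (1-pl) * γ v * (2:ℝ)^(-((i.1:ℤ)+1)))
            = ((1-pl) * γ v * (2:ℝ)^(-((i.1:ℤ)+1))) + (-Q) := by ring
        rw [heq, Real.exp_add]
        have h1 : Real.exp ((1-pl) * γ v * (2:ℝ)^(-((i.1:ℤ)+1))) ≤ Real.exp (1/4) :=
          Real.exp_le_exp.mpr (hq i v).2
        calc Real.exp ((1-pl) * γ v * (2:ℝ)^(-((i.1:ℤ)+1))) * Real.exp (-Q)
            ≤ Real.exp (1/4) * Real.exp (-Q) :=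
              mul_le_mul_of_nonneg_right h1 (Real.exp_pos _).le
          _ ≤ 2 * Real.exp (-Q) :=
              mul_le_mul_of_nonneg_right exp_quarter_le_two' (Real.exp_pos _).le
      calc ∑ v ∈ G.neighborFinset u,
            (((1-pl) * γ v * (2:ℝ)^(-((i.1:ℤ)+1)))
              * ∏ w ∈ (G.neighborFinset u).erase v,
                  (1 - (1-pl) * γ w * (2:ℝ)^(-((i.1:ℤ)+1))))
          ≤ ∑ v ∈ G.neighborFinset u,
            ((1-pl) * γ v * (2:ℝ)^(-((i.1:ℤ)+1))) * (2 * Real.exp (-Q)) :=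
            sum_le_sum hperv
        _ = (∑ v ∈ G.neighborFinset u, (1-pl) * γ v * (2:ℝ)^(-((i.1:ℤ)+1)))
            * (2 * Real.exp (-Q)) := by rw [sum_mul]
        _ = 2 * Q * Real.exp (-Q) := by rw [hΓsum i]; ring
    -- per-channel min bound
    have hperI : ∀ i : Fin nA,
        (pl * γ u * (2:ℝ)^(-((i.1:ℤ)+1))) * (∑ v ∈ G.neighborFinset u,
          (((1-pl) * γ v * (2:ℝ)^(-((i.1:ℤ)+1)))
            * ∏ w ∈ (G.neighborFinset u).erase v, (1 - (1-pl) * γ w * (2:ℝ)^(-((i.1:ℤ)+1)))))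
        ≤ (pl * γ u * (4 * (1/Γ)))
          * min (((1-pl) * (2:ℝ)^(-((i.1:ℤ)+1)) * Γ)^2)
                (2 / ((1-pl) * (2:ℝ)^(-((i.1:ℤ)+1)) * Γ)) := by
      intro i
      set Q := (1-pl) * (2:ℝ)^(-((i.1:ℤ)+1)) * Γ with hQdef
      have hz0 : (0:ℝ) < (2:ℝ)^(-((i.1:ℤ)+1)) := two_zpow_pos' i.1
      have hQpos : 0 < Q := by
        rw [hQdef]
        apply mul_pos (mul_pos (by linarith) hz0) hΓpos
      have hcoef : (0:ℝ) ≤ pl * γ u * (2:ℝ)^(-((i.1:ℤ)+1)) :=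
        mul_nonneg (mul_nonneg hpl0.le (hγ0 u)) hz0.le
      have hzQ : (2:ℝ)^(-((i.1:ℤ)+1)) ≤ 2 * Q / Γ := by
        rw [le_div_iff₀ hΓpos]
        rw [hQdef]
        nlinarith [mul_nonneg hz0.le hΓpos.le]
      have hmin : Q^2 * Real.exp (-Q) ≤ min (Q^2) (2/Q) := by
        apply le_min
        · apply mul_le_of_le_one_right (sq_nonneg Q)
          rw [Real.exp_le_one_iff]
          linarith
        · have h3 := cube_le_two_exp' hQpos.le
          rw [Real.exp_neg, ← div_eq_mul_inv, div_le_div_iff₀ (Real.exp_pos Q) hQpos]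
          nlinarith
      have hX : (0:ℝ) ≤ (pl * γ u) * (2 * Q * Real.exp (-Q)) := by
        apply mul_nonneg (mul_nonneg hpl0.le (hγ0 u))
        positivity
      have hY : (0:ℝ) ≤ (pl * γ u) * (4 * (1/Γ)) := by
        apply mul_nonneg (mul_nonneg hpl0.le (hγ0 u))
        positivity
      calc (pl * γ u * (2:ℝ)^(-((i.1:ℤ)+1))) * (∑ v ∈ G.neighborFinset u,
            (((1-pl) * γ v * (2:ℝ)^(-((i.1:ℤ)+1)))
              * ∏ w ∈ (G.neighborFinset u).erase v,
                  (1 - (1-pl) * γ w * (2:ℝ)^(-((i.1:ℤ)+1)))))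
          ≤ (pl * γ u * (2:ℝ)^(-((i.1:ℤ)+1))) * (2 * Q * Real.exp (-Q)) :=
            mul_le_mul_of_nonneg_left (hS1 i) hcoef
        _ = ((pl * γ u) * (2 * Q * Real.exp (-Q))) * (2:ℝ)^(-((i.1:ℤ)+1)) := by ring
        _ ≤ ((pl * γ u) * (2 * Q * Real.exp (-Q))) * (2 * Q / Γ) :=
            mul_le_mul_of_nonneg_left hzQ hX
        _ = ((pl * γ u) * (4 * (1/Γ))) * (Q^2 * Real.exp (-Q)) := by ring
        _ ≤ ((pl * γ u) * (4 * (1/Γ))) * min (Q^2) (2/Q) :=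
            mul_le_mul_of_nonneg_left hmin hY
        _ = (pl * γ u * (4 * (1/Γ))) * min (Q^2) (2/Q) := by ring
    -- sum the min bound
    have ht0 : (0:ℝ) < (1-pl) * Γ / 2 := by
      apply div_pos (mul_pos (by linarith) hΓpos) (by norm_num)
    have hQt : ∀ i : Fin nA, (1-pl) * (2:ℝ)^(-((i.1:ℤ)+1)) * Γ
        = ((1-pl) * Γ / 2) / 2^(i.1) := by
      intro i
      rw [two_zpow_eq' i.1]
      ring
    have hsum5 : ∑ i : Fin nA,
        min (((1-pl) * (2:ℝ)^(-((i.1:ℤ)+1)) * Γ)^2)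
            (2 / ((1-pl) * (2:ℝ)^(-((i.1:ℤ)+1)) * Γ)) ≤ 5 := by
      have hrw : ∀ i : Fin nA,
          min (((1-pl) * (2:ℝ)^(-((i.1:ℤ)+1)) * Γ)^2)
              (2 / ((1-pl) * (2:ℝ)^(-((i.1:ℤ)+1)) * Γ))
          = min ((((1-pl) * Γ / 2) / 2^(i.1))^2) (2 / (((1-pl) * Γ / 2) / 2^(i.1))) := by
        intro i
        rw [hQt i]
      rw [sum_congr rfl fun i _ => hrw i]
      rw [Fin.sum_univ_eq_sum_range
        (fun k => min ((((1-pl) * Γ / 2) / 2^k)^2) (2 / (((1-pl) * Γ / 2) / 2^k)))]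
      exact key_sum' nA ((1-pl) * Γ / 2) ht0
    calc ∑ i : Fin nA, ∑ v ∈ G.neighborFinset u,
          (pl * γ u * (2:ℝ)^(-((i.1:ℤ)+1))) * (((1-pl) * γ v * (2:ℝ)^(-((i.1:ℤ)+1)))
            * ∏ w ∈ (G.neighborFinset u).erase v,
                (1 - (1-pl) * γ w * (2:ℝ)^(-((i.1:ℤ)+1))))
        = ∑ i : Fin nA, (pl * γ u * (2:ℝ)^(-((i.1:ℤ)+1))) * (∑ v ∈ G.neighborFinset u,
            (((1-pl) * γ v * (2:ℝ)^(-((i.1:ℤ)+1)))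
              * ∏ w ∈ (G.neighborFinset u).erase v,
                  (1 - (1-pl) * γ w * (2:ℝ)^(-((i.1:ℤ)+1))))) := by
          exact sum_congr rfl fun i _ => by rw [mul_sum]
      _ ≤ ∑ i : Fin nA, (pl * γ u * (4 * (1/Γ)))
            * min (((1-pl) * (2:ℝ)^(-((i.1:ℤ)+1)) * Γ)^2)
                  (2 / ((1-pl) * (2:ℝ)^(-((i.1:ℤ)+1)) * Γ)) :=
          sum_le_sum fun i _ => hperI i
      _ = (pl * γ u * (4 * (1/Γ))) * ∑ i : Fin nA,
            min (((1-pl) * (2:ℝ)^(-((i.1:ℤ)+1)) * Γ)^2)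
                (2 / ((1-pl) * (2:ℝ)^(-((i.1:ℤ)+1)) * Γ)) := by rw [mul_sum]
      _ ≤ (pl * γ u * (4 * (1/Γ))) * 5 := by
          apply mul_le_mul_of_nonneg_left hsum5
          apply mul_nonneg (mul_nonneg hpl0.le (hγ0 u))
          positivity
      _ = 20 * pl * γ u * (1/Γ) := by ring
  -- conclude
  rcases le_total Γ (1/Γ) with hm | hm
  · rw [min_eq_left hm]
    exact le_trans hstep1 (le_trans (le_of_eq hstep2) hA)
  · rw [min_eq_right hm]
    exact le_trans hstep1 (le_trans (le_of_eq hstep2) hB)
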